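/- arXiv:2209.00767 — 4 statements merged into one kernel-verified Lean document; each statement's English description precedes it below -/
import Mathlib

section
/- If A and B are elements of an associative algebra over a field of characteristic zero such that the commutator [A,B] commutes with both A and B (and the relevant exponentials exist, e.g. in a formal setting where A and B are locally nilpotent or in a topologically complete algebra), then exp(A)·exp(B) = exp(B)·exp(A)·exp([A,B]). -/
/-!
With `c = a * b - b * a` commuting with `a`, induction gives
`a ^ (n + 1) * b = b * a ^ (n + 1) + (n + 1) • (c * a ^ n)`, and summing the exponential series
termwise yields `exp a * b = (b + c) * exp a`. Hence `exp a` conjugates `exp b` to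
`exp (b + c) = exp b * exp c`, since `c` commutes with `b`; finally `exp c` commutes with `exp a`.
-/

open NormedSpace
open scoped Nat

theorem pow_succ_mul_eq_of_mul_eq_add {R : Type*} [Ring R] {a b c : R}
    (hab : a * b = b * a + c) (hac : Commute a c) (n : ℕ) :
    a ^ (n + 1) * b = b * a ^ (n + 1) + (n + 1) • (c * a ^ n) := by
  induction n with
  | zero => simpa using hab
  | succ n ih =>
    calc a ^ (n + 1 + 1) * b = a * (a ^ (n + 1) * b) := by rw [pow_succ' a (n + 1), mul_assoc]
      _ = (b * a + c) * a ^ (n + 1) + (n + 1) • (a * c * a ^ n) := by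
        rw [ih, mul_add, ← mul_assoc, hab, mul_smul_comm, mul_assoc]
      _ = b * a ^ (n + 1 + 1) + (n + 1 + 1) • (c * a ^ (n + 1)) := by
        rw [hac.eq, mul_assoc, ← pow_succ', pow_succ' a (n + 1), add_mul, mul_assoc,
          succ_nsmul _ (n + 1), add_assoc, add_comm (c * _)]

theorem exp_mul_eq_add_mul_exp_of_mul_eq_add {𝔸 : Type*} [NormedRing 𝔸] [NormedAlgebra ℚ 𝔸]
    [CompleteSpace 𝔸] {a b c : 𝔸} (hab : a * b = b * a + c) (hac : Commute a c) :
    exp a * b = (b + c) * exp a := by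
  set s : ℕ → 𝔸 := fun n => (n !⁻¹ : ℚ) • a ^ n
  have hs : HasSum s (exp a) := exp_series_hasSum_exp' a
  have hterm : ∀ n, s (n + 1) * b = b * s (n + 1) + c * s n := by
    intro n
    have hfac : ((n + 1)! : ℚ)⁻¹ * (n + 1 : ℕ) = (n ! : ℚ)⁻¹ := by
      rw [Nat.factorial_succ]; push_cast; field_simp
    simp only [s, smul_mul_assoc, pow_succ_mul_eq_of_mul_eq_add hab hac, smul_add, mul_smul_comm,
      ← Nat.cast_smul_eq_nsmul ℚ, smul_smul, hfac]
  have hleft : HasSum (fun n => s (n + 1) * b) (exp a * b - b) := by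
    simpa [s] using (hasSum_nat_add_iff' 1).mpr (hs.mul_right b)
  have hright : HasSum (fun n => b * s (n + 1) + c * s n) (b * exp a - b + c * exp a) := by
    refine HasSum.add ?_ (hs.mul_left c)
    simpa [s] using (hasSum_nat_add_iff' 1).mpr (hs.mul_left b)
  have h := hleft.unique (by simpa only [hterm] using hright)
  rwa [sub_add_eq_add_sub, sub_left_inj, ← add_mul] at h

/-- **Baker–Campbell–Hausdorff special case.**
If `A` and `B` are elements of a complete normed associative algebra over `ℂ`
(a field of characteristic zero) such that the commutator `[A,B] = AB − BA`
commutes with both `A` and `B`, then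
`exp(A)·exp(B) = exp(B)·exp(A)·exp([A,B])`. -/
theorem bch_special {𝔸 : Type*} [NormedRing 𝔸] [NormedAlgebra ℂ 𝔸] [CompleteSpace 𝔸]
    (A B : 𝔸) (hA : Commute (A * B - B * A) A) (hB : Commute (A * B - B * A) B) :
    NormedSpace.exp A * NormedSpace.exp B =
      NormedSpace.exp B * NormedSpace.exp A * NormedSpace.exp (A * B - B * A) := by
  let _ : NormedAlgebra ℚ 𝔸 := NormedAlgebra.restrictScalars ℚ ℂ 𝔸
  have hconj : SemiconjBy (exp A) B (B + (A * B - B * A)) :=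
    exp_mul_eq_add_mul_exp_of_mul_eq_add (add_sub_cancel (B * A) (A * B)).symm hA.symm
  calc exp A * exp B = exp (B + (A * B - B * A)) * exp A := hconj.exp_right
    _ = exp B * exp A * exp (A * B - B * A) := by
      rw [exp_add_of_commute hB.symm, mul_assoc, (hA.exp).eq, mul_assoc]
end

section
/- For a partition λ = (λ_1,…,λ_n) with at most n parts, the symplectic Schur function bialternant formula equals its Jacobi–Trudi determinant: det(x_i^{λ_j+n−j+1} − x_i^{−(λ_j+n−j+1)})_{i,j=1}^n / det(x_i^{n−j+1} − x_i^{−(n−j+1)})_{i,j=1}^n = det( h_{λ_i−i+j}(x^±) + [j>1]·h_{λ_i−i−j+2}(x^±) )_{i,j=1}^n, where [j>1] is 1 if j>1 and 0 otherwise. -/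
open scoped BigOperators
noncomputable section

/-- The multiplicative inverse of `1 - a·w` in `R[[w]]` (its constant coefficient is the unit 1). -/
def geomInv (R : Type*) [CommRing R] (a : R) : PowerSeries R :=
  PowerSeries.invOfUnit (1 - PowerSeries.C a * PowerSeries.X) 1

/-- The generalized complete homogeneous functions attached to a list `xs` of elements of `R`:
`∏_{a ∈ xs} 1/(1 - a w) = ∑_k h_k w^k`, with `h_k = 0` for `k < 0`. -/
def genH (R : Type*) [CommRing R] (xs : List R) (k : ℤ) : R :=
  if k < 0 then 0 else PowerSeries.coeff k.toNat (xs.map (geomInv R)).prod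

/-- The list `x_1, …, x_n, x_1⁻¹, …, x_n⁻¹`. -/
def pmList {F : Type*} [Field F] {n : ℕ} (x : Fin n → F) : List F :=
  List.ofFn x ++ List.ofFn (fun i => (x i)⁻¹)

/-- Symplectic Jacobi–Trudi determinant
`det( h_{λ_i−i+j} + [j>1] h_{λ_i−i−j+2} )_{i,j=1}^N` (1-based indices). -/
def spJT (R : Type*) [CommRing R] (h : ℤ → R) (N : ℕ) (lam : Fin N → ℤ) : R :=
  Matrix.det (Matrix.of fun i j : Fin N =>
    h (lam i - (i : ℕ) + (j : ℕ)) +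
      if 1 ≤ (j : ℕ) then h (lam i - (i : ℕ) - (j : ℕ)) else 0)

/-- Skew symplectic Jacobi–Trudi determinant
`det( h_{λ_i−μ_j−i+j} + [j>l+1] h_{λ_i−i−j+2l+2} )_{i,j=1}^N` (1-based indices),
where `μ_j = 0` for `j > l`. -/
def spSkewJT (R : Type*) [CommRing R] (h : ℤ → R) (N l : ℕ)
    (lam : Fin N → ℤ) (mu : Fin l → ℤ) : R :=
  Matrix.det (Matrix.of fun i j : Fin N =>
    h (lam i - (if hj : (j : ℕ) < l then mu ⟨j, hj⟩ else 0) - (i : ℕ) + (j : ℕ)) +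
      if l < (j : ℕ) then h (lam i - (i : ℕ) - (j : ℕ) + 2 * l) else 0)

/-- Orthogonal Jacobi–Trudi determinant `det( h_{λ_i−i+j} − h_{λ_i−i−j} )_{i,j=1}^N`
(1-based indices). -/
def oJT (R : Type*) [CommRing R] (h : ℤ → R) (N : ℕ) (lam : Fin N → ℤ) : R :=
  Matrix.det (Matrix.of fun i j : Fin N =>
    h (lam i - (i : ℕ) + (j : ℕ)) - h (lam i - (i : ℕ) - (j : ℕ) - 2))

/-- Skew orthogonal Jacobi–Trudi determinant
`det( h_{λ_i−μ_j−i+j} − [j>l] h_{λ_i−i−j+2l} )_{i,j=1}^N` (1-based indices). -/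
def oSkewJT (R : Type*) [CommRing R] (h : ℤ → R) (N l : ℕ)
    (lam : Fin N → ℤ) (mu : Fin l → ℤ) : R :=
  Matrix.det (Matrix.of fun i j : Fin N =>
    h (lam i - (if hj : (j : ℕ) < l then mu ⟨j, hj⟩ else 0) - (i : ℕ) + (j : ℕ)) -
      if l ≤ (j : ℕ) then h (lam i - (i : ℕ) - (j : ℕ) + 2 * l - 2) else 0)

/-- Schur Jacobi–Trudi determinant `det( h_{λ_i−i+j} )_{i,j=1}^N`. -/
def schurJT (R : Type*) [CommRing R] (h : ℤ → R) (N : ℕ) (lam : Fin N → ℤ) : R :=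
  Matrix.det (Matrix.of fun i j : Fin N => h (lam i - (i : ℕ) + (j : ℕ)))

/-!
Let `H(w) = ∏_l 1/((1 - x_l w)(1 - x_l⁻¹ w)) = ∑ h_k w^k`. The polynomial
`Q_k(w) = ∏_{l ≠ k} (1 - x_l w)(1 - x_l⁻¹ w)` is palindromic of degree `2(n-1)` and
`Q_k H = 1/((1 - x_k w)(1 - x_k⁻¹ w))`, whose coefficient of `w^m` is
`(x_k^{m+1} - x_k^{-(m+1)}) / (x_k - x_k⁻¹)`. Reading off the coefficient of `w^{λ_i+n-i}` and
folding the palindromic convolution sum gives the matrix identity `JT_λ · B = (A_λ)ᵀ`, where `JT_λ`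
is the Jacobi–Trudi matrix, `A_λ` the bialternant matrix and `B` does not depend on `λ`. For
`λ = 0` the Jacobi–Trudi matrix is unitriangular, so `det B` is the denominator `det A_0`.
-/

open Finset
open scoped Polynomial PowerSeries

section GeometricSeries

variable {R : Type*} [CommRing R]

theorem one_sub_C_mul_X_mul_geomInv (a : R) :
    (1 - PowerSeries.C a * PowerSeries.X) * geomInv R a = 1 :=
  PowerSeries.mul_invOfUnit _ _ (by simp)

theorem geomInv_eq_rescale_mk_one (a : R) :
    geomInv R a = PowerSeries.rescale a (PowerSeries.mk 1) := by
  have hmk :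
      PowerSeries.rescale a (PowerSeries.mk 1) * (1 - PowerSeries.C a * PowerSeries.X) = 1 := by
    rw [← PowerSeries.rescale_X, ← map_one (PowerSeries.rescale a), ← map_sub, ← map_mul,
      PowerSeries.mk_one_mul_one_sub_eq_one, map_one]
  calc geomInv R a
      = PowerSeries.rescale a (PowerSeries.mk 1) * (1 - PowerSeries.C a * PowerSeries.X) *
          geomInv R a := by rw [hmk, one_mul]
    _ = PowerSeries.rescale a (PowerSeries.mk 1) := by
      rw [mul_assoc, one_sub_C_mul_X_mul_geomInv, mul_one]

theorem coeff_geomInv (a : R) (m : ℕ) : PowerSeries.coeff m (geomInv R a) = a ^ m := by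
  simp [geomInv_eq_rescale_mk_one]

theorem genH_of_neg (xs : List R) {k : ℤ} (hk : k < 0) : genH R xs k = 0 :=
  if_pos hk

theorem genH_natCast_sub (xs : List R) (m r : ℕ) :
    genH R xs ((m : ℤ) - r) =
      if r ≤ m then PowerSeries.coeff (m - r) (xs.map (geomInv R)).prod else 0 := by
  by_cases hr : r ≤ m
  · rw [if_pos hr, genH, if_neg (by omega), ← Nat.cast_sub hr, Int.toNat_natCast]
  · rw [if_neg hr, genH_of_neg xs (by omega)]

theorem genH_zero (xs : List R) : genH R xs 0 = 1 := by
  have h := genH_natCast_sub xs 0 0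
  simp only [Nat.cast_zero, sub_zero, le_refl, if_true] at h
  simp [h, PowerSeries.coeff_zero_eq_constantCoeff, map_list_prod, Function.comp_def,
    ← PowerSeries.coeff_zero_eq_constantCoeff_apply, coeff_geomInv]

theorem coeff_coe_mul_geomInv_prod (p : R[X]) (xs : List R) (m : ℕ) :
    PowerSeries.coeff m ((p : R⟦X⟧) * (xs.map (geomInv R)).prod) =
      ∑ r ∈ range (p.natDegree + 1), p.coeff r * genH R xs ((m : ℤ) - r) := by
  rw [← Polynomial.eval₂_C_X_eq_coe, Polynomial.eval₂_eq_sum_range, Finset.sum_mul, map_sum]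
  refine Finset.sum_congr rfl fun r _ => ?_
  rw [mul_assoc, PowerSeries.coeff_C_mul, PowerSeries.coeff_X_pow_mul', genH_natCast_sub, mul_ite,
    mul_zero]

end GeometricSeries

section Folding

variable {R : Type*} [CommRing R]

theorem sum_range_mul_eq_sum_fold (d : ℕ) (q : ℕ → R)
    (hq : ∀ r ≤ 2 * d, q (2 * d - r) = q r) (h : ℤ → R) (s : ℤ) :
    ∑ r ∈ range (2 * d + 1), q r * h (s + d - r) =
      ∑ j ∈ range (d + 1), (h (s + j) + if 1 ≤ j then h (s - j) else 0) * q (d - j) := by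
  have hlow : ∑ r ∈ range (d + 1), q r * h (s + d - r) =
      ∑ j ∈ range (d + 1), h (s + j) * q (d - j) := by
    rw [← Finset.sum_range_reflect]
    refine Finset.sum_congr rfl fun j hj => ?_
    rw [Finset.mem_range] at hj
    rw [mul_comm]
    congr 2
    omega
  have hhigh : ∑ r ∈ range d, q (d + 1 + r) * h (s + d - (d + 1 + r : ℕ)) =
      ∑ j ∈ range (d + 1), (if 1 ≤ j then h (s - j) else 0) * q (d - j) := by
    rw [Finset.sum_range_succ']
    simp only [Nat.le_add_left, if_true, Nat.one_ne_zero, nonpos_iff_eq_zero, if_false, zero_mul,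
      add_zero]
    refine Finset.sum_congr rfl fun r hr => ?_
    rw [Finset.mem_range] at hr
    rw [← hq (d + 1 + r) (by omega), mul_comm]
    congr 2 <;> push_cast <;> omega
  rw [show 2 * d + 1 = (d + 1) + d by omega, Finset.sum_range_add, hlow, hhigh,
    ← Finset.sum_add_distrib]
  exact Finset.sum_congr rfl fun j _ => (add_mul _ _ _).symm

end Folding

section PlusMinusFactor

variable {F : Type*} [Field F]

def pmQuadratic (a : F) : F[X] := Polynomial.X ^ 2 - Polynomial.C (a + a⁻¹) * Polynomial.X + 1

def pmSeries (a : F) : F⟦X⟧ := geomInv F a * geomInv F a⁻¹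

theorem pmQuadratic_natDegree (a : F) : (pmQuadratic a).natDegree = 2 := by
  unfold pmQuadratic
  compute_degree!

theorem pmQuadratic_monic (a : F) : (pmQuadratic a).Monic := by
  unfold pmQuadratic
  monicity!

theorem pmQuadratic_reverse (a : F) : (pmQuadratic a).reverse = pmQuadratic a := by
  ext i
  rw [Polynomial.coeff_reverse, pmQuadratic_natDegree]
  rcases lt_or_ge 2 i with hi | hi
  · rw [Polynomial.revAt_eq_self_of_lt hi]
  · rw [Polynomial.revAt_le hi]
    interval_cases i <;> simp [pmQuadratic, Polynomial.coeff_one, Polynomial.coeff_X]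

theorem coe_pmQuadratic {a : F} (ha : a ≠ 0) :
    (pmQuadratic a : F⟦X⟧) =
      (1 - PowerSeries.C a * PowerSeries.X) * (1 - PowerSeries.C a⁻¹ * PowerSeries.X) := by
  have h : PowerSeries.C a * PowerSeries.C a⁻¹ = (1 : F⟦X⟧) := by
    rw [← map_mul, mul_inv_cancel₀ ha, map_one]
  simp only [pmQuadratic, Polynomial.coe_add, Polynomial.coe_sub, Polynomial.coe_mul,
    Polynomial.coe_pow, Polynomial.coe_X, Polynomial.coe_C, Polynomial.coe_one, map_add]
  linear_combination (-PowerSeries.X ^ 2 : F⟦X⟧) * h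

theorem coe_pmQuadratic_mul_pmSeries {a : F} (ha : a ≠ 0) :
    (pmQuadratic a : F⟦X⟧) * pmSeries a = 1 := by
  rw [coe_pmQuadratic ha, pmSeries, mul_mul_mul_comm, one_sub_C_mul_X_mul_geomInv,
    one_sub_C_mul_X_mul_geomInv, one_mul]

-- Partial fractions: `(a - a⁻¹) / ((1 - a w) (1 - a⁻¹ w)) = a / (1 - a w) - a⁻¹ / (1 - a⁻¹ w)`.
theorem sub_inv_mul_coeff_pmSeries (a : F) (m : ℕ) :
    (a - a⁻¹) * PowerSeries.coeff m (pmSeries a) = a ^ (m + 1) - a⁻¹ ^ (m + 1) := by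
  have hfrac : PowerSeries.C (a - a⁻¹) * pmSeries a =
      PowerSeries.C a * geomInv F a - PowerSeries.C a⁻¹ * geomInv F a⁻¹ := by
    have h1 := one_sub_C_mul_X_mul_geomInv a
    have h2 := one_sub_C_mul_X_mul_geomInv a⁻¹
    rw [pmSeries, map_sub]
    linear_combination (PowerSeries.C a * geomInv F a) * h2 -
      (PowerSeries.C a⁻¹ * geomInv F a⁻¹) * h1
  have := congrArg (PowerSeries.coeff m) hfrac
  rwa [PowerSeries.coeff_C_mul, map_sub, PowerSeries.coeff_C_mul, PowerSeries.coeff_C_mul,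
    coeff_geomInv, coeff_geomInv, ← pow_succ', ← pow_succ'] at this

end PlusMinusFactor

section Cofactor

variable {F : Type*} [Field F] {n : ℕ}

def pmCofactor (x : Fin n → F) (k : Fin n) : F[X] := ∏ i ∈ univ.erase k, pmQuadratic (x i)

theorem pmCofactor_natDegree (x : Fin n → F) (k : Fin n) :
    (pmCofactor x k).natDegree = 2 * (n - 1) := by
  rw [pmCofactor, Polynomial.natDegree_prod _ _ fun i _ => (pmQuadratic_monic (x i)).ne_zero]
  simp [pmQuadratic_natDegree, Finset.card_erase_of_mem, mul_comm]

theorem pmCofactor_reverse (x : Fin n → F) (k : Fin n) :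
    (pmCofactor x k).reverse = pmCofactor x k :=
  Finset.prod_induction _ (fun p : F[X] => p.reverse = p)
    (fun p q hp hq => by rw [Polynomial.reverse_mul_of_domain, hp, hq])
    (by rw [← Polynomial.C_1, Polynomial.reverse_C]) fun i _ => pmQuadratic_reverse (x i)

theorem pmCofactor_coeff_two_mul_sub (x : Fin n → F) (k : Fin n) {r : ℕ}
    (hr : r ≤ 2 * (n - 1)) :
    (pmCofactor x k).coeff (2 * (n - 1) - r) = (pmCofactor x k).coeff r := by
  conv_rhs => rw [← pmCofactor_reverse x k]
  rw [Polynomial.coeff_reverse, pmCofactor_natDegree, Polynomial.revAt_le hr]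

theorem geomInv_pmList_prod (x : Fin n → F) :
    ((pmList x).map (geomInv F)).prod = ∏ i, pmSeries (x i) := by
  rw [pmList, List.map_append, List.prod_append, List.map_ofFn, List.map_ofFn, List.prod_ofFn,
    List.prod_ofFn, ← Finset.prod_mul_distrib]
  rfl

theorem coe_pmCofactor_mul_geomInv_prod {x : Fin n → F} (hx : ∀ i, x i ≠ 0) (k : Fin n) :
    (pmCofactor x k : F⟦X⟧) * ((pmList x).map (geomInv F)).prod = pmSeries (x k) := by
  rw [geomInv_pmList_prod, ← Finset.mul_prod_erase _ _ (Finset.mem_univ k), pmCofactor,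
    ← Polynomial.coeToPowerSeries.ringHom_apply, map_prod, mul_left_comm, ← Finset.prod_mul_distrib]
  simp only [Polynomial.coeToPowerSeries.ringHom_apply, coe_pmQuadratic_mul_pmSeries (hx _),
    Finset.prod_const_one, mul_one]

def cofactorMatrix (x : Fin n → F) : Matrix (Fin n) (Fin n) F :=
  Matrix.of fun j k => (x k - (x k)⁻¹) * (pmCofactor x k).coeff (n - 1 - j)

theorem sum_spJT_entry_mul_cofactorMatrix {x : Fin n → F} (hx : ∀ i, x i ≠ 0) (lam : Fin n → ℕ)
    (i k : Fin n) :
    ∑ j : Fin n, (genH F (pmList x) ((lam i : ℤ) - (i : ℕ) + (j : ℕ)) +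
        if 1 ≤ (j : ℕ) then genH F (pmList x) ((lam i : ℤ) - (i : ℕ) - (j : ℕ)) else 0) *
        cofactorMatrix x j k =
      x k ^ ((lam i : ℤ) + n - (i : ℕ)) - x k ^ (-((lam i : ℤ) + n - (i : ℕ))) := by
  obtain ⟨d, rfl⟩ := Nat.exists_eq_add_one_of_ne_zero (Fin.pos k).ne'
  set m := lam i + (d - i)
  have hmZ : (m : ℤ) = (lam i - (i : ℕ) : ℤ) + d := by
    have := i.isLt
    omega
  have hexp : (lam i : ℤ) + ↑(d + 1) - (i : ℕ) = ((m + 1 : ℕ) : ℤ) := by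
    push_cast
    omega
  have hdeg : (pmCofactor x k).natDegree = 2 * d := by simpa using pmCofactor_natDegree x k
  have hsymm : ∀ r ≤ 2 * d, (pmCofactor x k).coeff (2 * d - r) = (pmCofactor x k).coeff r :=
    fun r hr => by simpa using pmCofactor_coeff_two_mul_sub x k (by simpa using hr)
  rw [hexp, zpow_neg, zpow_natCast, ← inv_pow, ← sub_inv_mul_coeff_pmSeries,
    ← coe_pmCofactor_mul_geomInv_prod hx, coeff_coe_mul_geomInv_prod, hdeg, hmZ,
    sum_range_mul_eq_sum_fold d _ hsymm, Finset.sum_range, Finset.mul_sum]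
  refine Finset.sum_congr rfl fun j _ => ?_
  rw [cofactorMatrix, Matrix.of_apply, Nat.add_sub_cancel]
  ring

end Cofactor

theorem spJT_const_zero {R : Type*} [CommRing R] {h : ℤ → R} (h0 : h 0 = 1)
    (hneg : ∀ k < 0, h k = 0) (N : ℕ) : spJT R h N (fun _ => 0) = 1 := by
  have hif : ∀ i : Fin N, (if 1 ≤ (i : ℕ) then h (0 - (i : ℕ) - (i : ℕ)) else 0) = 0 := fun i => by
    split_ifs
    exacts [hneg _ (by omega), rfl]
  rw [spJT, Matrix.det_of_isUpperTriangular]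
  · exact Finset.prod_eq_one fun i _ => by
      simp only [Matrix.of_apply, sub_add_cancel, h0, hif, add_zero]
  · intro i j hij
    have hji : (j : ℕ) < i := hij
    rw [Matrix.of_apply, hneg _ (by omega), zero_add]
    split_ifs
    exacts [hneg _ (by omega), rfl]

def bialternant {F : Type*} [Field F] {n : ℕ} (x : Fin n → F) (e : Fin n → ℤ) :
    Matrix (Fin n) (Fin n) F :=
  Matrix.of fun i j => x i ^ e j - x i ^ (-e j)

theorem det_bialternant_eq_spJT_mul_det {F : Type*} [Field F] {n : ℕ} {x : Fin n → F}
    (hx : ∀ i, x i ≠ 0) (lam : Fin n → ℕ) :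
    (bialternant x fun j => (lam j : ℤ) + n - (j : ℕ)).det =
      spJT F (genH F (pmList x)) n (fun i => (lam i : ℤ)) * (cofactorMatrix x).det := by
  rw [spJT, ← Matrix.det_mul, ← Matrix.det_transpose]
  congr 1
  ext i k
  rw [Matrix.mul_apply]
  exact (sum_spJT_entry_mul_cofactorMatrix hx lam i k).symm

theorem symplectic_bialternant_eq_jacobiTrudi_general {F : Type*} [Field F] {n : ℕ}
    (x : Fin n → F) (hx : ∀ i, x i ≠ 0)
    (lam : Fin n → ℕ)
    (hden : Matrix.det (Matrix.of fun i j : Fin n =>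
      (x i) ^ ((n : ℤ) - (j : ℕ)) - (x i) ^ (-((n : ℤ) - (j : ℕ)))) ≠ 0) :
    Matrix.det (Matrix.of fun i j : Fin n =>
        (x i) ^ ((lam j : ℤ) + n - (j : ℕ)) - (x i) ^ (-((lam j : ℤ) + n - (j : ℕ)))) /
      Matrix.det (Matrix.of fun i j : Fin n =>
        (x i) ^ ((n : ℤ) - (j : ℕ)) - (x i) ^ (-((n : ℤ) - (j : ℕ)))) =
    spJT F (genH F (pmList x)) n (fun i => (lam i : ℤ)) := by
  have hweyl : (bialternant x fun j => (n : ℤ) - (j : ℕ)).det = (cofactorMatrix x).det := by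
    simpa [spJT_const_zero (genH_zero _) fun _ => genH_of_neg _] using
      det_bialternant_eq_spJT_mul_det hx fun _ => 0
  change (bialternant x _).det ≠ 0 at hden
  change (bialternant x _).det / (bialternant x _).det = _
  rw [hweyl] at hden ⊢
  rw [det_bialternant_eq_spJT_mul_det hx lam, mul_div_cancel_right₀ _ hden]

/-- **Bialternant = Jacobi–Trudi for symplectic Schur functions.**
For a partition `λ` with at most `n` parts (with nonvanishing Weyl denominator),
`det(x_i^{λ_j+n−j+1} − x_i^{−(λ_j+n−j+1)}) / det(x_i^{n−j+1} − x_i^{−(n−j+1)})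
 = det( h_{λ_i−i+j}(x^±) + [j>1] h_{λ_i−i−j+2}(x^±) )`. -/
theorem symplectic_bialternant_eq_jacobiTrudi {F : Type*} [Field F] {n : ℕ}
    (x : Fin n → F) (hx : ∀ i, x i ≠ 0)
    (lam : Fin n → ℕ) (hlam : Antitone lam)
    (hden : Matrix.det (Matrix.of fun i j : Fin n =>
      (x i) ^ ((n : ℤ) - (j : ℕ)) - (x i) ^ (-((n : ℤ) - (j : ℕ)))) ≠ 0) :
    Matrix.det (Matrix.of fun i j : Fin n =>
        (x i) ^ ((lam j : ℤ) + n - (j : ℕ)) - (x i) ^ (-((lam j : ℤ) + n - (j : ℕ)))) /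
      Matrix.det (Matrix.of fun i j : Fin n =>
        (x i) ^ ((n : ℤ) - (j : ℕ)) - (x i) ^ (-((n : ℤ) - (j : ℕ)))) =
    spJT F (genH F (pmList x)) n (fun i => (lam i : ℤ)) :=
  symplectic_bialternant_eq_jacobiTrudi_general x hx lam hden
end
end

section
/- (o_λ(x^±;1) equals the odd orthogonal character) Let λ = (λ_1,…,λ_n) be a partition. Then det(A_{ij})_{i,j=1}^{n+1} / det(B_{ij})_{i,j=1}^{n+1} = det( x_i^{λ_j+n−j+1/2} − x_i^{−(λ_j+n−j+1/2)} )_{i,j=1}^n / det( x_i^{n−j+1/2} − x_i^{−(n−j+1/2)} )_{i,j=1}^n, where for 1 ≤ i ≤ n: A_{ij} = x_i^{λ_j+n−j+1} + x_i^{−(λ_j+n−j+1)} − [λ_j>0]·(x_i^{λ_j+n−j} + x_i^{−(λ_j+n−j)}) evaluated at z = 1 (so with z^{−1} = 1), A_{n+1,j} = [λ_j>0]·0 + [λ_j=0]·2 (i.e., the last row evaluated at z=1 giving 0 for λ_j>0 and 2 for λ_j=0), B_{ij} = x_i^{n−j+1} + x_i^{−(n−j+1)} for i ≤ n, and B_{n+1,j}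 = 2. -/
open scoped BigOperators
noncomputable section

/-! With `x_i = t_i²`, the top rows of `A` and `B` are built from `x^m + x^{-m}`, and the
columns of `A` with `λ_j = 0` are columns of `B`. Since the zero parts of `λ` come last,
subtracting from each column with `λ_j = 0` the column after it leaves `(0, …, 0, 2)` as last
row, and turns every top entry into a difference
`x^m + x^{-m} - x^{m-1} - x^{-(m-1)} = (x^{1/2} - x^{-1/2}) (x^{m-1/2} - x^{-(m-1/2)})`.
Expanding along the last row, `det A = 2 ∏ (t_i - t_i⁻¹) · det(t_i^{2λ_j+2n-2j-1} - …)`, the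
case `λ = 0` gives `det B`, and the common factor cancels. -/

theorem zpow_two_mul_add_zpow_neg_sub {F : Type*} [Field F] {x : F} (hx : x ≠ 0) (m : ℤ) :
    x ^ (2 * m) + x ^ (-(2 * m)) - (x ^ (2 * (m - 1)) + x ^ (-(2 * (m - 1)))) =
      (x - x⁻¹) * (x ^ (2 * m - 1) - x ^ (-(2 * m - 1))) := by
  simp only [zpow_neg, mul_sub, mul_one, zpow_sub₀ hx, zpow_one, zpow_two]
  field_simp
  ring

namespace Matrix

variable {R : Type*} [CommRing R] {n : ℕ}

theorem det_eq_of_forall_col_eq_smul_add_succ {A B : Matrix (Fin (n + 1)) (Fin (n + 1)) R}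
    (c : Fin n → R) (A_last : ∀ i, A i (Fin.last n) = B i (Fin.last n))
    (A_castSucc : ∀ i (j : Fin n), A i j.castSucc = B i j.castSucc + c j * A i j.succ) :
    det A = det B := by
  have h := det_eq_of_forall_col_eq_smul_add_pred (A := A.submatrix id Fin.revPerm)
    (B := B.submatrix id Fin.revPerm) (c ∘ Fin.rev) (fun i => by simpa using A_last i)
    (fun i j => by simpa [Fin.rev_succ, Fin.rev_castSucc] using A_castSucc i j.rev)
  rw [det_permute', det_permute'] at h
  exact (Units.map (Int.castRingHom R).toMonoidHom _).isUnit.mul_left_cancel h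

theorem det_eq_mul_det_castSucc_of_last_row_eq_single {A : Matrix (Fin (n + 1)) (Fin (n + 1)) R}
    {c : R} (h : A (Fin.last n) = Pi.single (Fin.last n) c) :
    det A = c * det (A.submatrix Fin.castSucc Fin.castSucc) := by
  rw [det_succ_row A (Fin.last n), Fintype.sum_eq_single (Fin.last n)]
  · simp [h, Fin.succAbove_last]
  · intro j hj
    simp [h, hj]

end Matrix

open Matrix

theorem det_eq_mul_det_sub_pred {R : Type*} [CommRing R] {n : ℕ} (v : Fin n → ℤ → R) (c : R)
    (lam : Fin (n + 1) → ℕ) (hlam : Antitone lam) (hlast : lam (Fin.last n) = 0)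
    {A : Matrix (Fin (n + 1)) (Fin (n + 1)) R}
    (hA : ∀ i j, A i.castSucc j = v i ((lam j : ℤ) + n - (j : ℕ)) -
      if 0 < lam j then v i ((lam j : ℤ) + n - (j : ℕ) - 1) else 0)
    (hA_last : ∀ j, A (Fin.last n) j = if lam j = 0 then c else 0) :
    A.det = c * det (of fun i j : Fin n =>
      v i ((lam j.castSucc : ℤ) + n - (j : ℕ)) - v i ((lam j.castSucc : ℤ) + n - (j : ℕ) - 1)) := by
  have hzero : ∀ k : Fin n, lam k.castSucc = 0 → lam k.succ = 0 := fun k h =>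
    Nat.eq_zero_of_le_zero (h ▸ hlam Fin.castSucc_lt_succ.le)
  set B : Matrix (Fin (n + 1)) (Fin (n + 1)) R := of fun i => Fin.lastCases (A i (Fin.last n))
    fun k => A i k.castSucc - (if lam k.castSucc = 0 then 1 else 0) * A i k.succ
  have hAB : A.det = B.det := det_eq_of_forall_col_eq_smul_add_succ
    (fun k => if lam k.castSucc = 0 then 1 else 0) (fun i => by simp [B]) (fun i k => by simp [B])
  have hB_last : B (Fin.last n) = Pi.single (Fin.last n) c := by
    ext j
    refine Fin.lastCases ?_ (fun k => ?_) j
    · simp [B, hA_last, hlast]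
    · by_cases h : lam k.castSucc = 0 <;> simp [B, hA_last, h, hzero, Fin.castSucc_ne_last]
  have hB_top : B.submatrix Fin.castSucc Fin.castSucc = of fun i j : Fin n =>
      v i ((lam j.castSucc : ℤ) + n - (j : ℕ)) - v i ((lam j.castSucc : ℤ) + n - (j : ℕ) - 1) := by
    ext i k
    by_cases h : lam k.castSucc = 0
    · simp [B, hA, h, hzero k h, sub_add_eq_sub_sub]
    · simp [B, hA, h, Nat.pos_of_ne_zero h]
  rw [hAB, det_eq_mul_det_castSucc_of_last_row_eq_single hB_last, hB_top]

theorem det_eq_mul_prod_mul_det_zpow_sub_zpow_neg {F : Type*} [Field F] {n : ℕ} {t : Fin n → F}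
    (ht : ∀ i, t i ≠ 0) (c : F) (lam : Fin (n + 1) → ℕ) (hlam : Antitone lam)
    (hlast : lam (Fin.last n) = 0) {A : Matrix (Fin (n + 1)) (Fin (n + 1)) F}
    (hA : ∀ i j, A i.castSucc j =
      t i ^ (2 * ((lam j : ℤ) + n - (j : ℕ))) + t i ^ (-(2 * ((lam j : ℤ) + n - (j : ℕ)))) -
        if 0 < lam j then
          t i ^ (2 * ((lam j : ℤ) + n - (j : ℕ) - 1)) +
            t i ^ (-(2 * ((lam j : ℤ) + n - (j : ℕ) - 1)))
        else 0)
    (hA_last : ∀ j, A (Fin.last n) j = if lam j = 0 then c else 0) :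
    A.det = c * (∏ i, (t i - (t i)⁻¹)) * det (of fun i j : Fin n =>
      t i ^ (2 * (lam j.castSucc : ℤ) + 2 * n - 2 * (j : ℕ) - 1) -
        t i ^ (-(2 * (lam j.castSucc : ℤ) + 2 * n - 2 * (j : ℕ) - 1))) := by
  rw [det_eq_mul_det_sub_pred (fun i m => t i ^ (2 * m) + t i ^ (-(2 * m))) c lam hlam hlast hA
    hA_last, mul_assoc, ← det_mul_column]
  congr
  ext i j
  simp only [of_apply, zpow_two_mul_add_zpow_neg_sub (ht i)]
  ring_nf

/-- **`o_λ(x^±;1)` equals the odd orthogonal character `so_λ(x^±)`.**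
Half-integer powers are realized by the substitution `x_i = t_i²`.  With `λ` padded by
`λ_{n+1} = 0`, `A` as in the statement (rows `1,…,n` evaluated at `z = 1`, last row
`2·[λ_j = 0]`), and `B` the corresponding denominator matrix, one has
`det A / det B = det(x_i^{λ_j+n−j+1/2} − x_i^{−(λ_j+n−j+1/2)}) / det(x_i^{n−j+1/2} − x_i^{−(n−j+1/2)})`. -/
theorem universal_orthogonal_at_one_eq_odd_orthogonal {F : Type*} [Field F] {n : ℕ}
    (t : Fin n → F) (ht : ∀ i, t i ≠ 0)
    (lam : Fin n → ℕ) (hlam : Antitone lam)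
    (lam' : Fin (n + 1) → ℕ)
    (hlam' : ∀ j : Fin (n + 1), lam' j = if hj : (j : ℕ) < n then lam ⟨j, hj⟩ else 0)
    (A B : Matrix (Fin (n + 1)) (Fin (n + 1)) F)
    (hA : ∀ i j, A i j =
      if hi : (i : ℕ) < n then
        (t ⟨i, hi⟩) ^ (2 * ((lam' j : ℤ) + n - (j : ℕ))) +
          (t ⟨i, hi⟩) ^ (-(2 * ((lam' j : ℤ) + n - (j : ℕ)))) -
          (if 0 < lam' j then
            (t ⟨i, hi⟩) ^ (2 * ((lam' j : ℤ) + n - (j : ℕ) - 1)) +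
              (t ⟨i, hi⟩) ^ (-(2 * ((lam' j : ℤ) + n - (j : ℕ) - 1)))
          else 0)
      else (if lam' j = 0 then 2 else 0))
    (hB : ∀ i j, B i j =
      if hi : (i : ℕ) < n then
        (t ⟨i, hi⟩) ^ (2 * ((n : ℤ) - (j : ℕ))) + (t ⟨i, hi⟩) ^ (-(2 * ((n : ℤ) - (j : ℕ))))
      else 2)
    (hBne : B.det ≠ 0) :
    A.det / B.det =
      Matrix.det (Matrix.of fun i j : Fin n =>
          (t i) ^ (2 * (lam j : ℤ) + 2 * n - 2 * (j : ℕ) - 1) -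
            (t i) ^ (-(2 * (lam j : ℤ) + 2 * n - 2 * (j : ℕ) - 1))) /
        Matrix.det (Matrix.of fun i j : Fin n =>
          (t i) ^ (2 * (n : ℤ) - 2 * (j : ℕ) - 1) - (t i) ^ (-(2 * (n : ℤ) - 2 * (j : ℕ) - 1))) := by
  have hlam'_anti : Antitone lam' := by
    intro a b hab
    rw [hlam', hlam']
    split_ifs with hb ha
    · exact hlam hab
    · omega
    · exact Nat.zero_le _
    · exact le_rfl
  have hlam'_last : lam' (Fin.last n) = 0 := by simp [hlam']
  have hlam'_castSucc : ∀ j : Fin n, lam' j.castSucc = lam j := fun j => by simp [hlam']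
  have hA_det := det_eq_mul_prod_mul_det_zpow_sub_zpow_neg ht 2 lam' hlam'_anti hlam'_last
    (A := A) (fun i j => by simp [hA]) (fun j => by simp [hA])
  have hB_det := det_eq_mul_prod_mul_det_zpow_sub_zpow_neg ht 2 (fun _ => 0) antitone_const rfl
    (A := B) (fun i j => by simp [hB]) (fun j => by simp [hB])
  simp only [hlam'_castSucc] at hA_det
  simp only [Nat.cast_zero, mul_zero, zero_add] at hB_det
  rw [hB_det] at hBne ⊢
  rw [hA_det, mul_div_mul_left _ _ (left_ne_zero_of_mul hBne)]
end
end

section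
/- (Orthogonality of symplectic partition vectors) Let Y(z) and Y*(z) be the symplectic vertex operators on the Fock space of the rank-one Heisenberg algebra, with modes satisfying Y_i Y_j + Y_{j+1} Y_{i−1} = 0, Y*_i Y*_j + Y*_{j−1} Y*_{i+1} = 0, Y_i Y*_j + Y*_{j+1} Y_{i+1} = δ_{i,j}, Y_n|0⟩ = Y*_{−n}|0⟩ = 0 for n > 0, Y_0|0⟩ = Y*_0|0⟩ = |0⟩, ⟨0|Y*_n = −⟨0|Y*_{−n+2}, ⟨0|Y_n = ⟨0|Y_{−n}. For partitions μ = (μ_1,…,μ_l) and λ = (λ_1,…,λ_l) (zero parts allowed), define |λ^{sp}⟩ = Y_{−λ_1}⋯Y_{−λ_l}|0⟩ and ⟨μ^{sp}| = ⟨0|Y*_{−μ_l}⋯Y*_{−μ_1}. Then ⟨μ^{sp}|λ^{sp}⟩ = δ_{λμ}. -/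
/-!
Commuting `Ys j` to the right with `Ys j * Y i = δ_{i,j} - Y (i - 1) * Ys (j - 1)` until it
hits the vacuum (where `Ys m |0⟩ = 0` for `m < 0`) shows that for a weakly increasing list
`i :: x`, `Ys j |i :: x⟩` equals `δ_{i,j} |x⟩` modulo the span of kets of weakly increasing
lists having an entry `< j`. When `j` is the smallest index of the bra `⟨j :: t|`, these kets are
orthogonal to `⟨t|` by induction on the length, so only `δ_{i,j} ⟨t|x⟩` survives.
-/

theorem List.ofFn_comp_rev {α : Type*} {n : ℕ} (f : Fin n → α) :
    List.ofFn (f ∘ Fin.rev) = (List.ofFn f).reverse := by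
  refine List.ext_getElem (by simp) fun k hk _ => ?_
  simp only [List.length_ofFn] at hk
  simp only [List.getElem_ofFn, List.getElem_reverse, Function.comp_apply, List.length_ofFn]
  congr 1
  ext
  simp only [Fin.val_rev]
  omega

theorem Module.End.list_foldr_apply {R V : Type*} [Semiring R] [AddCommMonoid V] [Module R V]
    (L : List (Module.End R V)) (v : V) : L.foldr (fun f w => f w) v = L.prod v := by
  induction L with
  | nil => rfl
  | cons f L ih => simp [ih]

theorem List.Pairwise.cons_of_le {α : Type*} [Preorder α] {b k : α} {z : List α}
    (h : (k :: z).Pairwise (· ≤ ·)) (hbk : b ≤ k) : (b :: k :: z).Pairwise (· ≤ ·) :=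
  List.pairwise_cons.mpr ⟨fun _ ha => hbk.trans ((List.mem_cons.mp ha).elim (fun h => h.ge)
    (List.rel_of_pairwise_cons h)), h⟩

namespace SymplecticFock

variable {R V : Type*} [Ring R] [AddCommGroup V] [Module R V]
variable (Y Ys : ℤ → Module.End R V) (vacuum : V) (vac : V →ₗ[R] R)

theorem Ys_apply_Y_apply
    (hYYs : ∀ i j : ℤ, Y i * Ys j + Ys (j + 1) * Y (i + 1) = if i = j then 1 else 0)
    (i j : ℤ) (v : V) : Ys j (Y i v) = (if i = j then v else 0) - Y (i - 1) (Ys (j - 1) v) := by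
  have h := LinearMap.congr_fun (hYYs (i - 1) (j - 1)) v
  simp only [sub_add_cancel, sub_left_inj, LinearMap.add_apply, Module.End.mul_apply] at h
  rw [eq_sub_iff_add_eq, add_comm, h]
  split_ifs <;> rfl

def ket (x : List ℤ) : V := (x.map Y).prod vacuum

@[simp] theorem ket_nil : ket Y vacuum [] = vacuum := rfl

@[simp] theorem ket_cons (i : ℤ) (x : List ℤ) : ket Y vacuum (i :: x) = Y i (ket Y vacuum x) :=
  rfl

-- The lower bound `b` makes `Y b` map these kets to kets of sorted lists.
def spanKetsBelow (b j : ℤ) (n : ℕ) : Submodule R V :=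
  Submodule.span R
    (ket Y vacuum '' {z | z.length = n ∧ (b :: z).Pairwise (· ≤ ·) ∧ ∃ e ∈ z, e < j})

theorem ket_mem_spanKetsBelow {b j : ℤ} {z : List ℤ} (hb : (b :: z).Pairwise (· ≤ ·))
    {e : ℤ} (he : e ∈ z) (hej : e < j) :
    ket Y vacuum z ∈ spanKetsBelow Y vacuum b j z.length :=
  Submodule.subset_span ⟨z, ⟨rfl, hb, e, he, hej⟩, rfl⟩

theorem apply_mem_spanKetsBelow {b k j : ℤ} (hbk : b ≤ k) {n : ℕ} {v : V}
    (hv : v ∈ spanKetsBelow Y vacuum k (j - 1) n) :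
    Y k v ∈ spanKetsBelow Y vacuum b j (n + 1) := by
  suffices h : spanKetsBelow Y vacuum k (j - 1) n ≤
      (spanKetsBelow Y vacuum b j (n + 1)).comap (Y k) from h hv
  refine Submodule.span_le.mpr ?_
  rintro _ ⟨z, ⟨rfl, hz, e, he, hej⟩, rfl⟩
  rw [SetLike.mem_coe, Submodule.mem_comap, ← ket_cons]
  have hmem := ket_mem_spanKetsBelow Y vacuum (j := j) (hz.cons_of_le hbk)
    (List.mem_cons_of_mem k he) (by omega)
  exact hmem

theorem Ys_apply_ket_cons_sub_mem_spanKetsBelow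
    (hcomm : ∀ i j v, Ys j (Y i v) = (if i = j then v else 0) - Y (i - 1) (Ys (j - 1) v))
    (hvac : ∀ m < 0, Ys m vacuum = 0) (a : List ℤ) {i j b : ℤ}
    (ha : (i :: a).Pairwise (· ≤ ·)) (hbi : b ≤ i) (hj : j ≤ a.length) :
    Ys j (ket Y vacuum (i :: a)) - (if i = j then ket Y vacuum a else 0) ∈
      spanKetsBelow Y vacuum (b - 1) j a.length := by
  induction a generalizing i j b with
  | nil =>
    have hj : j - 1 < 0 := by simp only [List.length_nil, Nat.cast_zero] at hj; omega
    rw [ket_cons, hcomm, ket_nil, hvac (j - 1) hj, map_zero, sub_zero, sub_self]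
    exact zero_mem _
  | cons i' a ih =>
    rw [ket_cons, hcomm, sub_sub_cancel_left]
    refine neg_mem ?_
    have hi' : i ≤ i' := List.rel_of_pairwise_cons ha List.mem_cons_self
    have hrest := ih (j := j - 1) ha.of_cons hi'
      (by simp only [List.length_cons, Nat.cast_add, Nat.cast_one] at hj; omega)
    rw [← sub_add_cancel (Ys (j - 1) (ket Y vacuum (i' :: a))) (if i' = j - 1 then _ else 0),
      map_add]
    refine add_mem (apply_mem_spanKetsBelow Y vacuum (by omega) hrest) ?_
    split_ifs with h
    · have hia : ((i - 1) :: a).Pairwise (· ≤ ·) :=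
        (ha.cons_of_le (sub_one_lt i).le).sublist (by simp)
      exact ket_mem_spanKetsBelow Y vacuum (hia.cons_of_le (by omega)) List.mem_cons_self
        (by omega)
    · exact (map_zero (Y (i - 1))).symm ▸ zero_mem _

def bra (y : List ℤ) : V →ₗ[R] R := vac ∘ₗ (y.map Ys).reverse.prod

@[simp] theorem bra_nil : bra Ys vac [] = vac := rfl

@[simp] theorem bra_cons (j : ℤ) (t : List ℤ) (v : V) :
    bra Ys vac (j :: t) v = bra Ys vac t (Ys j v) := by
  simp [bra, List.prod_append]

theorem spanKetsBelow_le_ker_bra {b j : ℤ} {t : List ℤ} (ht : ∀ e ∈ t, j ≤ e)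
    (horth : ∀ z : List ℤ, z.Pairwise (· ≤ ·) → z.length = t.length →
      bra Ys vac t (ket Y vacuum z) = if z = t then 1 else 0) :
    spanKetsBelow Y vacuum b j t.length ≤ LinearMap.ker (bra Ys vac t) := by
  refine Submodule.span_le.mpr ?_
  rintro _ ⟨z, ⟨hz, hzs, e, he, hej⟩, rfl⟩
  rw [SetLike.mem_coe, LinearMap.mem_ker, horth z hzs.of_cons hz, if_neg]
  rintro rfl
  exact (ht e he).not_gt hej

theorem bra_ket
    (hcomm : ∀ i j v, Ys j (Y i v) = (if i = j then v else 0) - Y (i - 1) (Ys (j - 1) v))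
    (hvac : ∀ m < 0, Ys m vacuum = 0) (hnorm : vac vacuum = 1)
    (y : List ℤ) (hy : y.Pairwise (· ≤ ·)) (hy0 : ∀ e ∈ y, e ≤ 0)
    (x : List ℤ) (hx : x.Pairwise (· ≤ ·)) (hlen : x.length = y.length) :
    bra Ys vac y (ket Y vacuum x) = if x = y then 1 else 0 := by
  induction y generalizing x with
  | nil =>
    rw [List.length_eq_zero_iff.mp hlen]
    simp [hnorm]
  | cons j t ih =>
    obtain _ | ⟨i, x⟩ := x
    · simp at hlen
    have hlen : x.length = t.length := by simpa using hlen
    have ih' := ih hy.of_cons (fun e he => hy0 e (List.mem_cons_of_mem j he))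
    have htri := Ys_apply_ket_cons_sub_mem_spanKetsBelow Y Ys vacuum hcomm hvac x hx le_rfl
      (j := j) (by have := hy0 j List.mem_cons_self; omega)
    rw [hlen] at htri
    have hker := spanKetsBelow_le_ker_bra Y Ys vacuum vac
      (fun e he => List.rel_of_pairwise_cons hy he) ih' htri
    calc bra Ys vac (j :: t) (ket Y vacuum (i :: x))
        = bra Ys vac t (Ys j (ket Y vacuum (i :: x))) := bra_cons Ys vac j t _
      _ = bra Ys vac t (if i = j then ket Y vacuum x else 0) := by
        rwa [LinearMap.mem_ker, map_sub, sub_eq_zero] at hker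
      _ = if i :: x = j :: t then 1 else 0 := by
        by_cases hij : i = j
        · simp [hij, ih' x hx.of_cons hlen]
        · simp [hij]

end SymplecticFock

open SymplecticFock in
theorem symplectic_partition_vectors_orthogonal_general
    {F V : Type*} [Field F] [AddCommGroup V] [Module F V]
    (Y Ys : ℤ → Module.End F V) (vacuum : V) (vac : V →ₗ[F] F)
    (hYYs : ∀ i j : ℤ, Y i * Ys j + Ys (j + 1) * Y (i + 1) =
      if i = j then 1 else 0)
    (hYsvac : ∀ n : ℤ, 0 < n → Ys (-n) vacuum = 0)
    (hnorm : vac vacuum = 1)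
    {l : ℕ} (mu lam : Fin l → ℕ) (hmu : Antitone mu) (hlam : Antitone lam) :
    vac ((List.ofFn fun i : Fin l => Ys (-(mu (Fin.rev i) : ℤ))).foldr
          (fun f v => f v)
          ((List.ofFn fun i : Fin l => Y (-(lam i : ℤ))).foldr (fun f v => f v) vacuum)) =
      if lam = mu then 1 else 0 := by
  have hsorted {κ : Fin l → ℕ} (hκ : Antitone κ) :
      (List.ofFn fun i => -(κ i : ℤ)).Pairwise (· ≤ ·) :=
    List.pairwise_ofFn.mpr fun i j hij => neg_le_neg (Int.ofNat_le.mpr (hκ hij.le))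
  have hket : (List.ofFn fun i => Y (-(lam i : ℤ))).foldr (fun f v => f v) vacuum =
      ket Y vacuum (List.ofFn fun i => -(lam i : ℤ)) := by
    rw [Module.End.list_foldr_apply, ket, List.map_ofFn]
    rfl
  have hbra (v : V) :
      vac ((List.ofFn fun i => Ys (-(mu (Fin.rev i) : ℤ))).foldr (fun f v => f v) v) =
      bra Ys vac (List.ofFn fun i => -(mu i : ℤ)) v := by
    rw [Module.End.list_foldr_apply, bra, List.map_ofFn, ← List.ofFn_comp_rev]
    rfl
  have hvac (m : ℤ) (hm : m < 0) : Ys m vacuum = 0 := by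
    simpa using hYsvac (-m) (neg_pos.mpr hm)
  rw [hbra, hket, bra_ket Y Ys vacuum vac (Ys_apply_Y_apply Y Ys hYYs) hvac hnorm _ (hsorted hmu)
    (by simp) _ (hsorted hlam) (by simp)]
  simp [List.ofFn_inj, funext_iff]

/-- **Orthogonality of symplectic partition vectors.**
Given mode operators `Y n`, `Y* n` on a vector space `V` over a field, a vacuum vector
`|0⟩` and a covacuum functional `⟨0|` satisfying the symplectic vertex-operator relations
`Y_i Y_j + Y_{j+1} Y_{i−1} = 0`, `Y*_i Y*_j + Y*_{j−1} Y*_{i+1} = 0`,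
`Y_i Y*_j + Y*_{j+1} Y_{i+1} = δ_{i,j}`, `Y_n|0⟩ = Y*_{−n}|0⟩ = 0` for `n > 0`,
`Y_0|0⟩ = Y*_0|0⟩ = |0⟩`, `⟨0|Y*_n = −⟨0|Y*_{−n+2}`, `⟨0|Y_n = ⟨0|Y_{−n}` and `⟨0|0⟩ = 1`,
the pairing of the partition vectors `|λ^{sp}⟩ = Y_{−λ_1}⋯Y_{−λ_l}|0⟩` and
`⟨μ^{sp}| = ⟨0|Y*_{−μ_l}⋯Y*_{−μ_1}` is `⟨μ^{sp}|λ^{sp}⟩ = δ_{λμ}`. -/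
theorem symplectic_partition_vectors_orthogonal
    {F V : Type*} [Field F] [AddCommGroup V] [Module F V]
    (Y Ys : ℤ → Module.End F V) (vacuum : V) (vac : V →ₗ[F] F)
    (hYY : ∀ i j : ℤ, Y i * Y j + Y (j + 1) * Y (i - 1) = 0)
    (hYsYs : ∀ i j : ℤ, Ys i * Ys j + Ys (j - 1) * Ys (i + 1) = 0)
    (hYYs : ∀ i j : ℤ, Y i * Ys j + Ys (j + 1) * Y (i + 1) =
      if i = j then 1 else 0)
    (hYvac : ∀ n : ℤ, 0 < n → Y n vacuum = 0)
    (hYsvac : ∀ n : ℤ, 0 < n → Ys (-n) vacuum = 0)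
    (hY0 : Y 0 vacuum = vacuum) (hYs0 : Ys 0 vacuum = vacuum)
    (hcovacYs : ∀ (n : ℤ) (v : V), vac (Ys n v) = -vac (Ys (-n + 2) v))
    (hcovacY : ∀ (n : ℤ) (v : V), vac (Y n v) = vac (Y (-n) v))
    (hnorm : vac vacuum = 1)
    {l : ℕ} (mu lam : Fin l → ℕ) (hmu : Antitone mu) (hlam : Antitone lam) :
    vac ((List.ofFn fun i : Fin l => Ys (-(mu (Fin.rev i) : ℤ))).foldr
          (fun f v => f v)
          ((List.ofFn fun i : Fin l => Y (-(lam i : ℤ))).foldr (fun f v => f v) vacuum)) =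
      if lam = mu then 1 else 0 :=
  symplectic_partition_vectors_orthogonal_general Y Ys vacuum vac hYYs hYsvac hnorm mu lam hmu hlam
end
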